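/- arXiv:1304.4819 — 5 statements merged into one kernel-verified Lean document; each statement's English description precedes it below -/
import Mathlib

section
/- If μ is a probability distribution on Z_m with μ(0) ≤ 1/(100m), then the sum over j = 1 to m-1 of |E_{x∼μ}[ω_m^{jx}]| is at least 0.99, where ω_m = e^{2πi/m}. -/
open Finset Complex

theorem stmt_0 (m : ℕ) [NeZero m] (hm : 2 ≤ m) (μ : ZMod m → ℝ)
    (hnn : ∀ x, 0 ≤ μ x) (hsum : ∑ x, μ x = 1)
    (h0 : μ 0 ≤ 1 / (100 * m)) :
    (0.99 : ℝ) ≤ ∑ j ∈ Finset.Ico 1 m,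
      ‖∑ x : ZMod m, (μ x : ℂ) *
        Complex.exp (2 * Real.pi * Complex.I * j * (x.val : ℂ) / m)‖ := by
  have hmpos : 0 < m := Nat.pos_of_ne_zero (NeZero.ne m)
  have hmC : (m : ℂ) ≠ 0 := Nat.cast_ne_zero.mpr (NeZero.ne m)
  set ω : ℂ := Complex.exp (2 * Real.pi * Complex.I / m) with hω
  have hprim : IsPrimitiveRoot ω m := Complex.isPrimitiveRoot_exp m (NeZero.ne m)
  set F : ℕ → ℂ := fun j => ∑ x : ZMod m, (μ x : ℂ) *
        Complex.exp (2 * Real.pi * Complex.I * j * (x.val : ℂ) / m) with hF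
  have hterm : ∀ (j : ℕ) (x : ZMod m),
      Complex.exp (2 * Real.pi * Complex.I * j * (x.val : ℂ) / m) = (ω ^ x.val) ^ j := by
    intro j x
    rw [hω, ← Complex.exp_nat_mul, ← Complex.exp_nat_mul]
    congr 1
    field_simp
  have hinner : ∀ x : ZMod m, ∑ j ∈ Finset.range m, (ω ^ x.val) ^ j
      = if x = 0 then (m : ℂ) else 0 := by
    intro x
    by_cases hx : x = 0
    · simp [hx]
    · have hvx : x.val ≠ 0 := fun h => hx ((ZMod.val_eq_zero x).mp h)
      have hne : ω ^ x.val ≠ 1 := by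
        intro h
        have hdvd := (hprim.pow_eq_one_iff_dvd x.val).mp h
        have hlt : x.val < m := ZMod.val_lt x
        exact hvx (Nat.eq_zero_of_dvd_of_lt hdvd hlt)
      have hone : (ω ^ x.val) ^ m = 1 := by
        rw [← pow_mul, mul_comm, pow_mul, hprim.pow_eq_one, one_pow]
      rw [geom_sum_eq hne, hone]
      simp [hx]
  have hswap : ∑ j ∈ Finset.range m, F j = (m : ℂ) * μ 0 := by
    simp only [hF]
    rw [Finset.sum_comm]
    calc ∑ x : ZMod m, ∑ j ∈ Finset.range m,
          (μ x : ℂ) * Complex.exp (2 * Real.pi * Complex.I * j * (x.val : ℂ) / m)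
        = ∑ x : ZMod m, (μ x : ℂ) * (if x = 0 then (m : ℂ) else 0) := by
          refine Finset.sum_congr rfl fun x _ => ?_
          rw [← Finset.mul_sum]
          congr 1
          rw [← hinner x]
          exact Finset.sum_congr rfl fun j _ => hterm j x
      _ = (m : ℂ) * μ 0 := by
          simp [mul_ite, mul_comm]
  have hF0 : F 0 = 1 := by
    simp only [hF]
    have h1 : ∀ x : ZMod m,
        Complex.exp (2 * Real.pi * Complex.I * (0 : ℕ) * (x.val : ℂ) / m) = 1 := by
      intro x; norm_num
    simp only [h1, mul_one]
    rw [← Complex.ofReal_sum]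
    exact_mod_cast congrArg (Complex.ofReal) hsum
  have hsplit : ∑ j ∈ Finset.Ico 1 m, F j = (m : ℂ) * μ 0 - 1 := by
    have h := Finset.sum_eq_sum_Ico_succ_bot hmpos F
    rw [← Finset.range_eq_Ico, hswap, hF0] at h
    norm_num at h
    linear_combination -h
  have hμm : (m : ℝ) * μ 0 ≤ 1 / 100 := by
    have hm' : (0 : ℝ) < m := Nat.cast_pos.mpr hmpos
    have := mul_le_mul_of_nonneg_left h0 hm'.le
    calc (m : ℝ) * μ 0 ≤ (m : ℝ) * (1 / (100 * m)) := this
      _ = 1 / 100 := by field_simp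
  have hnn' : 0 ≤ (m : ℝ) * μ 0 :=
    mul_nonneg (Nat.cast_nonneg m) (hnn 0)
  have hnorm : (0.99 : ℝ) ≤ ‖∑ j ∈ Finset.Ico 1 m, F j‖ := by
    rw [hsplit]
    have hcast : ((m : ℂ) * μ 0 - 1) = (((m : ℝ) * μ 0 - 1 : ℝ) : ℂ) := by push_cast; ring
    rw [hcast, Complex.norm_real, Real.norm_eq_abs]
    calc (0.99 : ℝ) ≤ 1 - (m : ℝ) * μ 0 := by linarith
      _ ≤ |(m : ℝ) * μ 0 - 1| := by rw [abs_sub_comm]; exact le_abs_self _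
  calc (0.99 : ℝ) ≤ ‖∑ j ∈ Finset.Ico 1 m, F j‖ := hnorm
    _ ≤ ∑ j ∈ Finset.Ico 1 m, ‖F j‖ := norm_sum_le _ _
end

section
/- If a matching vector family (U,V) in Z_m^n respects a partition (r_1, r_2, r_3) of m, then ⟨u_i, v_j⟩ ≡ 0 (mod r_1·r_2) for all i, j ∈ [t]. -/
/-- A matching vector family in `Z_m^n`: vectors are represented with coordinates
in `{0, ..., m-1}`, inner products are taken over the integers and reduced mod `m`. -/
def IsMVFamily (m n t : ℕ) (u v : Fin t → Fin n → ℕ) : Prop :=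
  (∀ i k, u i k < m) ∧ (∀ i k, v i k < m) ∧
  (∀ i, (∑ k, u i k * v i k) % m = 0) ∧
  (∀ i j, i ≠ j → (∑ k, u i k * v j k) % m ≠ 0)

/-- The family `(u, v)` respects the partition `(r₁, r₂, r₃)` of `m`. -/
def Respects (m n t r₁ r₂ r₃ : ℕ) (u v : Fin t → Fin n → ℕ) : Prop :=
  r₁ * r₂ * r₃ = m ∧ 0 < r₁ ∧ 0 < r₂ ∧ 0 < r₃ ∧
  (∀ i j k, u i k % r₁ = u j k % r₁) ∧
  (∀ i j k, v i k % r₂ = v j k % r₂) ∧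
  (∀ i j, (∑ k, (u i k / r₁) * (v i k % r₂)) % r₂ =
          (∑ k, (u j k / r₁) * (v j k % r₂)) % r₂) ∧
  (∀ i j, (∑ k, (u i k % r₁) * (v i k / r₂)) % r₁ =
          (∑ k, (u j k % r₁) * (v j k / r₂)) % r₁)

theorem stmt_4 (m n t r₁ r₂ r₃ : ℕ) (u v : Fin t → Fin n → ℕ)
    (hMV : IsMVFamily m n t u v) (hresp : Respects m n t r₁ r₂ r₃ u v) :
    ∀ i j, (∑ k, u i k * v j k) % (r₁ * r₂) = 0 := by
  obtain ⟨hu, hv, hdiag, hoff⟩ := hMV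
  obtain ⟨hm, hr1, hr2, hr3, hu1, hv2, h3, h4⟩ := hresp
  intro i j
  -- work over ℤ
  have key : ((r₁ * r₂ : ℕ) : ℤ) ∣ (∑ k, (u i k : ℤ) * v j k) := by
    -- diagonal is divisible
    have hdvd_m : (r₁ * r₂ : ℕ) ∣ m := ⟨r₃, hm.symm⟩
    have hdi : ((r₁ * r₂ : ℕ) : ℤ) ∣ (∑ k, (u i k : ℤ) * v i k) := by
      have h1 : (m : ℕ) ∣ ∑ k, u i k * v i k := Nat.dvd_of_mod_eq_zero (hdiag i)
      have h2 : ((r₁ * r₂ : ℕ)) ∣ ∑ k, u i k * v i k := dvd_trans hdvd_m h1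
      have := Int.natCast_dvd_natCast.mpr h2
      simpa [Nat.cast_sum] using this
    -- difference is divisible
    have hdiff : ((r₁ * r₂ : ℕ) : ℤ) ∣
        (∑ k, (u i k : ℤ) * v j k) - (∑ k, (u i k : ℤ) * v i k) := by
      have fact1 : ∀ k, (v j k : ℤ) - v i k =
          (r₂ : ℤ) * ((v j k / r₂ : ℕ) - (v i k / r₂ : ℕ) : ℤ) := by
        intro k
        have e1 := Nat.div_add_mod (v j k) r₂
        have e2 := Nat.div_add_mod (v i k) r₂
        have e3 := hv2 i j k
        have c1 : (r₂ : ℤ) * (v j k / r₂ : ℕ) + ((v j k % r₂ : ℕ) : ℤ) = (v j k : ℤ) := by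
          exact_mod_cast congrArg (Nat.cast : ℕ → ℤ) e1
        have c2 : (r₂ : ℤ) * (v i k / r₂ : ℕ) + ((v i k % r₂ : ℕ) : ℤ) = (v i k : ℤ) := by
          exact_mod_cast congrArg (Nat.cast : ℕ → ℤ) e2
        have c3 : ((v i k % r₂ : ℕ) : ℤ) = ((v j k % r₂ : ℕ) : ℤ) := by exact_mod_cast e3
        linarith [c1, c2, c3]
      have fact2 : ∀ k, (u i k : ℤ) = (r₁ : ℤ) * (u i k / r₁ : ℕ) + ((u i k % r₁ : ℕ) : ℤ) := by
        intro k
        exact_mod_cast (congrArg (Nat.cast : ℕ → ℤ) (Nat.div_add_mod (u i k) r₁)).symm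
      -- the low-order sums are congruent mod r₁
      have h4' : ((∑ k, (u i k % r₁) * (v j k / r₂) : ℕ) : ℤ) % (r₁ : ℤ)
          = ((∑ k, (u i k % r₁) * (v i k / r₂) : ℕ) : ℤ) % (r₁ : ℤ) := by
        have hrw : (∑ k, (u i k % r₁) * (v j k / r₂)) = ∑ k, (u j k % r₁) * (v j k / r₂) := by
          exact Finset.sum_congr rfl (fun k _ => by rw [hu1 i j k])
        have : (∑ k, (u i k % r₁) * (v j k / r₂)) % r₁
            = (∑ k, (u i k % r₁) * (v i k / r₂)) % r₁ := by
          rw [hrw, ← h4 i j]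
        exact_mod_cast congrArg (Nat.cast : ℕ → ℤ) this
      have hdvd4 : (r₁ : ℤ) ∣ (∑ k, ((u i k % r₁ : ℕ) : ℤ) * ((v j k / r₂ : ℕ) : ℤ))
          - (∑ k, ((u i k % r₁ : ℕ) : ℤ) * ((v i k / r₂ : ℕ) : ℤ)) := by
        have hmeq : (∑ k, ((u i k % r₁ : ℕ) : ℤ) * ((v j k / r₂ : ℕ) : ℤ))
            ≡ (∑ k, ((u i k % r₁ : ℕ) : ℤ) * ((v i k / r₂ : ℕ) : ℤ)) [ZMOD (r₁ : ℤ)] := by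
          unfold Int.ModEq
          push_cast at h4' ⊢
          convert h4' using 2
        exact (Int.ModEq.dvd hmeq.symm)
      obtain ⟨D, hD⟩ := hdvd4
      refine ⟨(∑ k, ((u i k / r₁ : ℕ) : ℤ) * ((v j k / r₂ : ℕ) - (v i k / r₂ : ℕ))) + D, ?_⟩
      have expand : (∑ k, (u i k : ℤ) * v j k) - (∑ k, (u i k : ℤ) * v i k)
          = ∑ k, (u i k : ℤ) * ((v j k : ℤ) - (v i k : ℤ)) := by
        rw [← Finset.sum_sub_distrib]
        exact Finset.sum_congr rfl (fun k _ => by ring)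
      rw [expand]
      have step : ∑ k, (u i k : ℤ) * ((v j k : ℤ) - (v i k : ℤ))
          = (r₁ * r₂ : ℤ) * (∑ k, ((u i k / r₁ : ℕ) : ℤ) * ((v j k / r₂ : ℕ) - (v i k / r₂ : ℕ)))
            + (r₂ : ℤ) * ((∑ k, ((u i k % r₁ : ℕ) : ℤ) * ((v j k / r₂ : ℕ) : ℤ))
              - (∑ k, ((u i k % r₁ : ℕ) : ℤ) * ((v i k / r₂ : ℕ) : ℤ))) := by
        rw [Finset.mul_sum, ← Finset.sum_sub_distrib, Finset.mul_sum, ← Finset.sum_add_distrib]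
        refine Finset.sum_congr rfl (fun k _ => ?_)
        rw [fact1 k]
        rw [fact2 k]
        ring
      rw [step, hD]
      push_cast
      ring
    have := dvd_add hdiff hdi
    simpa using this
  have keyN : (r₁ * r₂ : ℕ) ∣ ∑ k, u i k * v j k := by
    have : ((∑ k, u i k * v j k : ℕ) : ℤ) = ∑ k, (u i k : ℤ) * v j k := by push_cast; ring
    exact_mod_cast this ▸ key
  omega
end

section
/- If a matching vector family (U,V) in Z_m^n respects the partition (r_1, r_2, 1) (i.e., r_1·r_2 = m), then (U,V) has size exactly 1. -/
theorem stmt_5 (m n t r₁ r₂ : ℕ) (u v : Fin t → Fin n → ℕ)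
    (ht : 0 < t)
    (hMV : IsMVFamily m n t u v) (hresp : Respects m n t r₁ r₂ 1 u v) :
    t = 1 := by
  obtain ⟨hr, hr1, hr2, _, hu, hv, hB, hC⟩ := hresp
  rw [mul_one] at hr
  obtain ⟨hul, hvl, hdiag, hoff⟩ := hMV
  by_contra hne
  have h2 : 2 ≤ t := by omega
  set i0 : Fin t := ⟨0, ht⟩ with hi0
  set i1 : Fin t := ⟨1, h2⟩ with hi1
  -- decomposition of the inner product mod m
  have decomp : ∀ i j : Fin t, (∑ k, u i k * v j k) % m
      = (r₁ * ((∑ k, (u i k / r₁) * (v j k % r₂)) % r₂)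
        + r₂ * ((∑ k, (u i k % r₁) * (v j k / r₂)) % r₁)
        + (∑ k, (u i k % r₁) * (v j k % r₂))) % m := by
    intro i j
    have e1 : (∑ k, u i k * v j k)
        = m * (∑ k, (u i k / r₁) * (v j k / r₂))
          + (r₁ * (∑ k, (u i k / r₁) * (v j k % r₂))
            + r₂ * (∑ k, (u i k % r₁) * (v j k / r₂))
            + (∑ k, (u i k % r₁) * (v j k % r₂))) := by
      rw [Finset.mul_sum, Finset.mul_sum, Finset.mul_sum,
        ← Finset.sum_add_distrib, ← Finset.sum_add_distrib, ← Finset.sum_add_distrib]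
      apply Finset.sum_congr rfl
      intro k _
      have h1 := Nat.div_add_mod (u i k) r₁
      have h2 := Nat.div_add_mod (v j k) r₂
      calc u i k * v j k
          = (r₁ * (u i k / r₁) + u i k % r₁) * (r₂ * (v j k / r₂) + v j k % r₂) := by
            rw [h1, h2]
        _ = _ := by rw [← hr]; ring
    rw [e1, Nat.mul_add_mod]
    have m1 : r₁ * (∑ k, (u i k / r₁) * (v j k % r₂))
        ≡ r₁ * ((∑ k, (u i k / r₁) * (v j k % r₂)) % r₂) [MOD m] := by
      rw [← hr]
      exact Nat.ModEq.mul_left' _ (Nat.mod_modEq _ _).symm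
    have m2 : r₂ * (∑ k, (u i k % r₁) * (v j k / r₂))
        ≡ r₂ * ((∑ k, (u i k % r₁) * (v j k / r₂)) % r₁) [MOD m] := by
      rw [← hr, mul_comm r₁ r₂]
      exact Nat.ModEq.mul_left' _ (Nat.mod_modEq _ _).symm
    exact ((m1.add m2).add_right _)
  have key : ∀ i j : Fin t, (∑ k, u i k * v j k) % m = (∑ k, u i0 k * v i0 k) % m := by
    intro i j
    rw [decomp i j, decomp i0 i0]
    have e1 : (∑ k, (u i k / r₁) * (v j k % r₂)) = (∑ k, (u i k / r₁) * (v i k % r₂)) :=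
      Finset.sum_congr rfl fun k _ => by rw [hv j i k]
    have e2 : (∑ k, (u i k % r₁) * (v j k / r₂)) = (∑ k, (u j k % r₁) * (v j k / r₂)) :=
      Finset.sum_congr rfl fun k _ => by rw [hu i j k]
    have e3 : (∑ k, (u i k % r₁) * (v j k % r₂)) = (∑ k, (u i0 k % r₁) * (v i0 k % r₂)) :=
      Finset.sum_congr rfl fun k _ => by rw [hu i i0 k, hv j i0 k]
    rw [e1, e2, e3, hB i i0, hC j i0]
  have hne01 : i0 ≠ i1 := Fin.ne_of_val_ne (by norm_num)
  exact hoff i0 i1 hne01 (by rw [key i0 i1, hdiag i0])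
end

section
/- For all integers m > 1 and n ≥ 1, every matching vector family in Z_m^n has size at most 100·m^{n/2 + 8.47}. -/
open Finset Matrix

universe u w

section CollisionCount

variable {α X : Type*} [Fintype α] [DecidableEq X]

def collisionCount (u : α → X) : ℕ := ∑ i, #{j | u j = u i}

lemma sum_sq_card_fiber_eq_collisionCount [Fintype X] (v : α → X) :
    ∑ y, #{b | v b = y} ^ 2 = collisionCount v := by
  rw [collisionCount, ← sum_fiberwise univ v]
  refine sum_congr rfl fun y _ => ?_
  rw [sum_congr rfl fun b hb => by rw [(mem_filter.1 hb).2], sum_const, smul_eq_mul, sq]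

lemma norm_sum_comp_sq_le [Fintype X] (H : X → ℂ) (v : α → X) :
    ‖∑ b, H (v b)‖ ^ 2 ≤ collisionCount v * ∑ y, ‖H y‖ ^ 2 := by
  have hfiber : ∑ b, H (v b) = ∑ y, (#{b | v b = y} : ℂ) * H y := by
    rw [← sum_fiberwise univ v]
    refine sum_congr rfl fun y _ => ?_
    rw [sum_congr rfl fun b hb => by rw [(mem_filter.1 hb).2], sum_const, nsmul_eq_mul]
  calc ‖∑ b, H (v b)‖ ^ 2 ≤ (∑ y, (#{b | v b = y} : ℝ) * ‖H y‖) ^ 2 := by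
        rw [hfiber]
        gcongr
        refine (norm_sum_le _ _).trans_eq (sum_congr rfl fun y _ => ?_)
        simp
    _ ≤ (∑ y, (#{b | v b = y} : ℝ) ^ 2) * ∑ y, ‖H y‖ ^ 2 := sum_mul_sq_le_sq_mul_sq _ _ _
    _ = collisionCount v * ∑ y, ‖H y‖ ^ 2 := by
        rw [← sum_sq_card_fiber_eq_collisionCount]
        push_cast
        rfl

end CollisionCount

namespace AddChar

lemma map_sum_eq_prod {A M : Type*} [AddCommMonoid A] [CommMonoid M] (ψ : AddChar A M)
    {κ : Type*} (s : Finset κ) (f : κ → A) : ψ (∑ k ∈ s, f k) = ∏ k ∈ s, ψ (f k) := by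
  induction s using Finset.cons_induction with
  | empty => simp
  | cons k s hk ih => rw [sum_cons, prod_cons, map_add_eq_mul, ih]

lemma IsPrimitive.mulShift {R R' : Type*} [CommRing R] [CommMonoid R'] {ψ : AddChar R R'}
    (hψ : ψ.IsPrimitive) {r : R} (hr : IsUnit r) : (ψ.mulShift r).IsPrimitive := fun s hs => by
  rw [mulShift_mulShift]
  exact hψ (hr.mul_right_eq_zero.not.2 hs)

variable {R ι : Type*} [CommRing R] [Fintype R] [DecidableEq R] [Fintype ι] [DecidableEq ι]
  {ψ : AddChar R ℂ}

lemma sum_dotProduct_eq_ite (hψ : ψ.IsPrimitive) (w : ι → R) :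
    ∑ y : ι → R, ψ (w ⬝ᵥ y) = if w = 0 then (Fintype.card R : ℂ) ^ Fintype.card ι else 0 := by
  simp_rw [dotProduct, map_sum_eq_prod]
  rw [← Fintype.prod_sum fun k r => ψ (w k * r)]
  simp_rw [mul_comm (w _), sum_mulShift _ hψ, apply_ite (Nat.cast : ℕ → ℂ), Nat.cast_zero]
  rw [prod_ite_zero]
  simp [funext_iff]

lemma sum_norm_sum_dotProduct_sq {α : Type*} [Fintype α] (hψ : ψ.IsPrimitive) (u : α → ι → R) :
    ∑ y : ι → R, ‖∑ a, ψ (u a ⬝ᵥ y)‖ ^ 2 = Fintype.card R ^ Fintype.card ι * collisionCount u := by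
  have hexpand : ∀ y : ι → R, (‖∑ a, ψ (u a ⬝ᵥ y)‖ : ℂ) ^ 2 =
      ∑ a, ∑ a', ψ ((u a' - u a) ⬝ᵥ y) := by
    intro y
    rw [← Complex.mul_conj', map_sum, sum_mul_sum, sum_comm]
    refine sum_congr rfl fun a _ => sum_congr rfl fun a' _ => ?_
    rw [← map_neg_eq_conj, ← map_add_eq_mul, sub_dotProduct, sub_eq_add_neg]
  apply Complex.ofReal_injective
  push_cast
  simp_rw [hexpand]
  rw [sum_comm]
  simp_rw [sum_comm (γ := ι → R), sum_dotProduct_eq_ite hψ, sub_eq_zero, collisionCount]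
  push_cast
  simp_rw [sum_ite, sum_const_zero, add_zero, sum_const, mul_sum, nsmul_eq_mul, mul_comm]

lemma norm_sum_sum_dotProduct_sq_le {α β : Type*} [Fintype α] [Fintype β] (hψ : ψ.IsPrimitive)
    (u : α → ι → R) (v : β → ι → R) :
    ‖∑ a, ∑ b, ψ (u a ⬝ᵥ v b)‖ ^ 2 ≤
      Fintype.card R ^ Fintype.card ι * collisionCount u * collisionCount v := by
  rw [sum_comm]
  refine (norm_sum_comp_sq_le (fun y => ∑ a, ψ (u a ⬝ᵥ y)) v).trans_eq ?_
  rw [sum_norm_sum_dotProduct_sq hψ]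
  ring

end AddChar

namespace ZMod

lemma sum_range_natCast {β : Type*} [AddCommMonoid β] (M : ℕ) [NeZero M] (f : ZMod M → β) :
    ∑ c ∈ range M, f c = ∑ c, f c :=
  sum_nbij' Nat.cast ZMod.val (by simp) (by simp [ZMod.val_lt])
    (fun c hc => ZMod.val_cast_of_lt (mem_range.1 hc)) (by simp) (by simp)

lemma stdAddChar_natCast_mul_eq {M q c c' : ℕ} [NeZero M] [NeZero q] (h : c * q = c' * M)
    (x : ℕ) : stdAddChar ((c * x : ℕ) : ZMod M) = stdAddChar ((c' * x : ℕ) : ZMod q) := by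
  have hexp (N : ℕ) [NeZero N] (n : ℕ) :
      stdAddChar (n : ZMod N) = Complex.exp (2 * Real.pi * Complex.I * n / N) := by
    simpa using stdAddChar_coe (N := N) n
  rw [hexp, hexp]
  congr 1
  have hc : (c : ℂ) * q = c' * M := by exact_mod_cast h
  rw [div_eq_div_iff (Nat.cast_ne_zero.2 (NeZero.ne M)) (Nat.cast_ne_zero.2 (NeZero.ne q))]
  push_cast
  linear_combination (2 * Real.pi * Complex.I * x) * hc

end ZMod

lemma card_filter_div_gcd_eq_le {M e : ℕ} (hM : 0 < M) :
    #{c ∈ Ico 1 M | M / Nat.gcd c M = e} ≤ e := by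
  rcases eq_empty_or_nonempty {c ∈ Ico 1 M | M / Nat.gcd c M = e} with h | ⟨c₀, hc₀⟩
  · simp [h]
  have hc₀e := (mem_filter.1 hc₀).2
  have hgcd : ∀ c ∈ {c ∈ Ico 1 M | M / Nat.gcd c M = e}, Nat.gcd c M = Nat.gcd c₀ M := by
    intro c hc
    rw [← Nat.div_div_self (Nat.gcd_dvd_right c M) hM.ne', (mem_filter.1 hc).2, ← hc₀e,
      Nat.div_div_self (Nat.gcd_dvd_right c₀ M) hM.ne']
  calc #{c ∈ Ico 1 M | M / Nat.gcd c M = e}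
      ≤ #{c ∈ Ioc 0 M | Nat.gcd c₀ M ∣ c} := by
        refine card_le_card fun c hc => ?_
        have hc' := mem_filter.1 hc
        simp only [mem_filter, mem_Ioc, mem_Ico] at hc' ⊢
        exact ⟨⟨hc'.1.1, hc'.1.2.le⟩, hgcd c hc ▸ Nat.gcd_dvd_left c M⟩
    _ = e := by rw [Nat.Ioc_filter_dvd_card_eq_div, hc₀e]

lemma sum_Ico_gcd_pow_three_le (M : ℕ) :
    ∑ c ∈ Ico 1 M, (Nat.gcd c M : ℝ) ^ 3 ≤ (M : ℝ) ^ 3 - (M : ℝ) ^ 2 := by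
  rcases Nat.eq_zero_or_pos M with rfl | hM
  · simp
  have hmaps : ∀ c ∈ Ico 1 M, M / Nat.gcd c M ∈ Ioc 1 M := by
    intro c hc
    rw [mem_Ico] at hc
    have hgc : Nat.gcd c M ≤ c := Nat.le_of_dvd hc.1 (Nat.gcd_dvd_left c M)
    rw [mem_Ioc, Nat.lt_div_iff_mul_lt' (Nat.gcd_dvd_right c M)]
    exact ⟨by omega, Nat.div_le_self M _⟩
  have hfiber : ∀ e ∈ Ioc 1 M, ∑ c ∈ Ico 1 M with M / Nat.gcd c M = e,
      (Nat.gcd c M : ℝ) ^ 3 ≤ M ^ 3 * ((e : ℝ) ^ 2)⁻¹ := by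
    intro e he
    have he0 : (0 : ℝ) < e := by exact_mod_cast (mem_Ioc.1 he).1.trans' zero_lt_one
    have hval : ∀ c ∈ {c ∈ Ico 1 M | M / Nat.gcd c M = e}, (Nat.gcd c M : ℝ) = M / e := by
      intro c hc
      have hmul := Nat.div_mul_cancel (Nat.gcd_dvd_right c M)
      rw [(mem_filter.1 hc).2] at hmul
      rw [eq_div_iff he0.ne', mul_comm]
      exact_mod_cast hmul
    rw [sum_congr rfl fun c hc => by rw [hval c hc], sum_const, nsmul_eq_mul]
    calc (#{c ∈ Ico 1 M | M / Nat.gcd c M = e} : ℝ) * ((M : ℝ) / e) ^ 3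
        ≤ e * ((M : ℝ) / e) ^ 3 := by gcongr; exact_mod_cast card_filter_div_gcd_eq_le hM
      _ = M ^ 3 * ((e : ℝ) ^ 2)⁻¹ := by field_simp
  calc ∑ c ∈ Ico 1 M, (Nat.gcd c M : ℝ) ^ 3
      = ∑ e ∈ Ioc 1 M, ∑ c ∈ Ico 1 M with M / Nat.gcd c M = e, (Nat.gcd c M : ℝ) ^ 3 :=
        (sum_fiberwise_of_maps_to hmaps _).symm
    _ ≤ ∑ e ∈ Ioc 1 M, (M : ℝ) ^ 3 * ((e : ℝ) ^ 2)⁻¹ := sum_le_sum hfiber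
    _ ≤ (M : ℝ) ^ 3 * (1 - (M : ℝ)⁻¹) := by
        rw [← mul_sum]
        gcongr
        simpa using sum_Ioc_inv_sq_le_sub (α := ℝ) one_ne_zero hM
    _ = (M : ℝ) ^ 3 - (M : ℝ) ^ 2 := by field_simp

lemma dotProduct_update_of_apply_eq_zero {ι R : Type*} [Fintype ι] [DecidableEq ι]
    [NonUnitalNonAssocSemiring R] {x : ι → R} {a : ι} (hx : x a = 0) (y : ι → R) (r : R) :
    x ⬝ᵥ Function.update y a r = x ⬝ᵥ y := by
  refine sum_congr rfl fun k _ => ?_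
  rcases eq_or_ne k a with rfl | hk
  · simp [hx]
  · rw [Function.update_of_ne hk]

section PointedMatching

variable {ι : Type u} [Fintype ι] {α : Type w} {M : ℕ} {a b : ι} {U V : α → ι → ℕ}

structure IsMatching (M : ℕ) (U V : α → ι → ℕ) : Prop where
  dvd_dotProduct_self : ∀ i, M ∣ U i ⬝ᵥ V i
  not_dvd_dotProduct : ∀ i j, i ≠ j → ¬ M ∣ U i ⬝ᵥ V j

structure IsPointedMatching (M : ℕ) (a b : ι) (U V : α → ι → ℕ) : Prop
    extends IsMatching M U V where
  left_apply_eq : ∀ i j, U i a = U j a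
  right_apply_eq : ∀ i j, V i b = V j b

lemma IsMatching.symm (h : IsMatching M U V) : IsMatching M V U where
  dvd_dotProduct_self i := dotProduct_comm (U i) (V i) ▸ h.dvd_dotProduct_self i
  not_dvd_dotProduct i j hij := dotProduct_comm (U j) (V i) ▸ h.not_dvd_dotProduct j i hij.symm

lemma IsPointedMatching.symm (h : IsPointedMatching M a b U V) : IsPointedMatching M b a V U :=
  { h.toIsMatching.symm with left_apply_eq := h.right_apply_eq, right_apply_eq := h.left_apply_eq }

theorem IsPointedMatching.exists_on_modEq (h : IsPointedMatching M a b U V) (hab : a ≠ b)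
    {q M' : ℕ} (hq : 0 < q) (hqM : q * M' = M) (i₀ : α) :
    ∃ U' V' : {i // ∀ k, U i k ≡ U i₀ k [MOD q]} → ι → ℕ, IsPointedMatching M' a b U' V' := by
  classical
  -- On the class, `U i = q • W i + R` with `W i a = 0`; the inner products `⟪R, V j⟫`, all
  -- divisible by `q`, are carried by the coordinate `a` of the new `V j`.
  set R : ι → ℕ := Function.update (fun k => U i₀ k % q) a (U i₀ a)
  set W : α → ι → ℕ := fun i => Function.update (fun k => U i k / q) a 0
  have hdecomp : ∀ i, (∀ k, U i k ≡ U i₀ k [MOD q]) → U i = q • W i + R := by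
    intro i hi
    funext k
    rcases eq_or_ne k a with rfl | hk
    · simp [W, R, h.left_apply_eq i i₀]
    · simp only [W, R, Pi.add_apply, Pi.smul_apply, smul_eq_mul, Function.update_of_ne hk]
      rw [← (hi k : U i k % q = _), Nat.div_add_mod]
  have hdot : ∀ i j, (∀ k, U i k ≡ U i₀ k [MOD q]) →
      U i ⬝ᵥ V j = q * (W i ⬝ᵥ V j) + R ⬝ᵥ V j := by
    intro i j hi
    rw [hdecomp i hi, add_dotProduct, smul_dotProduct, smul_eq_mul]
  have hR : ∀ j, (∀ k, U j k ≡ U i₀ k [MOD q]) → q ∣ R ⬝ᵥ V j := by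
    intro j hj
    have := (Dvd.intro M' hqM).trans (h.dvd_dotProduct_self j)
    rwa [hdot j j hj, Nat.dvd_add_right (dvd_mul_right q _)] at this
  refine ⟨fun i => W i + Pi.single a 1, fun j => Function.update (V j) a (R ⬝ᵥ V j / q), ?_⟩
  have hdvd : ∀ i j : {i // ∀ k, U i k ≡ U i₀ k [MOD q]},
      M' ∣ (W i + Pi.single a 1) ⬝ᵥ Function.update (V j) a (R ⬝ᵥ V j / q) ↔ M ∣ U i ⬝ᵥ V j := by
    intro i j
    rw [← hqM, ← Nat.mul_dvd_mul_iff_left hq, add_dotProduct,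
      dotProduct_update_of_apply_eq_zero (by simp [W]), single_dotProduct, Function.update_self,
      one_mul, mul_add, Nat.mul_div_cancel' (hR j j.2), hdot i j i.2]
  exact
    { dvd_dotProduct_self := fun i => (hdvd i i).2 (h.dvd_dotProduct_self i)
      not_dvd_dotProduct := fun i j hij => by
        rw [hdvd]
        exact h.not_dvd_dotProduct i j (Subtype.coe_injective.ne hij)
      left_apply_eq := fun i j => by simp [W]
      right_apply_eq := fun i j => by
        simp only [Function.update_of_ne hab.symm, h.right_apply_eq i j] }

def PointedBound (ι : Type u) [Fintype ι] (M : ℕ) (B : ℝ) : Prop :=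
  ∀ (α : Type w) [Fintype α] (a b : ι) (U V : α → ι → ℕ),
    a ≠ b → IsPointedMatching M a b U V → (Fintype.card α : ℝ) ≤ B

variable [Fintype α]

lemma PointedBound.card_modEq_le {M' q : ℕ} {B : ℝ} (hB : PointedBound.{u, w} ι M' B)
    (h : IsPointedMatching M a b U V) (hab : a ≠ b) (hq : 0 < q) (hqM : q * M' = M) (i₀ : α) :
    (#{i | ∀ k, U i k ≡ U i₀ k [MOD q]} : ℝ) ≤ B := by
  classical
  obtain ⟨U', V', h'⟩ := h.exists_on_modEq hab hq hqM i₀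
  simpa [Fintype.card_subtype] using hB _ a b U' V' hab h'

lemma PointedBound.collisionCount_le {M' q : ℕ} {B : ℝ} (hB : PointedBound.{u, w} ι M' B)
    (h : IsPointedMatching M a b U V) (hab : a ≠ b) (hq : 0 < q) (hqM : q * M' = M) :
    (collisionCount (fun i k => (U i k : ZMod q)) : ℝ) ≤ Fintype.card α * B := by
  rw [collisionCount, Nat.cast_sum]
  calc _ ≤ ∑ _i : α, B := sum_le_sum fun i _ => by
          simpa [funext_iff, ZMod.natCast_eq_natCast_iff] using hB.card_modEq_le h hab hq hqM i
    _ = Fintype.card α * B := by simp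

noncomputable def expSum (M : ℕ) [NeZero M] (U V : α → ι → ℕ) (c : ℕ) : ℂ :=
  ∑ i, ∑ j, ZMod.stdAddChar ((c * (U i ⬝ᵥ V j) : ℕ) : ZMod M)

lemma IsMatching.sum_range_expSum [NeZero M] (h : IsMatching M U V) :
    ∑ c ∈ range M, expSum M U V c = Fintype.card α * M := by
  classical
  have horth : ∀ i j, ∑ c ∈ range M, ZMod.stdAddChar ((c * (U i ⬝ᵥ V j) : ℕ) : ZMod M) =
      if i = j then (M : ℂ) else 0 := by
    intro i j
    simp_rw [Nat.cast_mul]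
    rw [ZMod.sum_range_natCast M fun c => ZMod.stdAddChar (c * _),
      AddChar.sum_mulShift _ (ZMod.isPrimitive_stdAddChar M), ZMod.card]
    simp_rw [ZMod.natCast_eq_zero_iff]
    by_cases hij : i = j
    · simp [hij, h.dvd_dotProduct_self j]
    · simp [hij, h.not_dvd_dotProduct i j hij]
  simp_rw [expSum]
  rw [sum_comm]
  simp_rw [sum_comm (s := range M), horth]
  simp

lemma IsMatching.sq_card_le [NeZero M] (h : IsMatching M U V) :
    (Fintype.card α : ℝ) ^ 2 ≤ Fintype.card α * M + ∑ c ∈ Ico 1 M, ‖expSum M U V c‖ := by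
  have hzero : expSum M U V 0 = (Fintype.card α : ℂ) ^ 2 := by simp [expSum, sq]
  have hsplit := h.sum_range_expSum
  rw [range_eq_Ico, sum_eq_sum_Ico_succ_bot (NeZero.pos M), hzero] at hsplit
  calc (Fintype.card α : ℝ) ^ 2 = ‖(Fintype.card α : ℂ) ^ 2‖ := by simp
    _ ≤ ‖(Fintype.card α * M : ℂ)‖ + ‖∑ c ∈ Ico 1 M, expSum M U V c‖ := by
        rw [eq_sub_of_add_eq hsplit]
        exact norm_sub_le _ _
    _ ≤ Fintype.card α * M + ∑ c ∈ Ico 1 M, ‖expSum M U V c‖ := by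
        gcongr
        · simp
        · exact norm_sum_le _ _

lemma sq_norm_expSum_le [NeZero M] (h : IsPointedMatching M a b U V) (hab : a ≠ b) (c : ℕ)
    {B : ℝ} (hB : PointedBound.{u, w} ι (Nat.gcd c M) B) :
    ‖expSum M U V c‖ ^ 2 ≤
      ((M / Nat.gcd c M : ℕ) : ℝ) ^ Fintype.card ι * (Fintype.card α * B) ^ 2 := by
  classical
  set d := Nat.gcd c M
  set q := M / d
  have hd : 0 < d := Nat.gcd_pos_of_pos_right c (NeZero.pos M)
  have hqd : q * d = M := Nat.div_mul_cancel (Nat.gcd_dvd_right c M)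
  have hq : 0 < q := Nat.div_pos (Nat.gcd_le_right c (NeZero.pos M)) hd
  have : NeZero q := ⟨hq.ne'⟩
  -- `c / M = (c / d) / q`, and `c / d` is a unit modulo `q`
  set ψ := (ZMod.stdAddChar : AddChar (ZMod q) ℂ).mulShift ((c / d : ℕ) : ZMod q)
  have hψ : ψ.IsPrimitive := (ZMod.isPrimitive_stdAddChar q).mulShift
    ((ZMod.isUnit_iff_coprime _ _).2 (Nat.coprime_div_gcd_div_gcd hd))
  have hterm : ∀ x : ℕ, ZMod.stdAddChar ((c * x : ℕ) : ZMod M) = ψ (x : ZMod q) := by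
    intro x
    rw [ZMod.stdAddChar_natCast_mul_eq (c' := c / d) (q := q), AddChar.mulShift_apply,
      Nat.cast_mul]
    rw [← hqd, ← mul_assoc, mul_right_comm, Nat.div_mul_cancel (Nat.gcd_dvd_left c M : d ∣ c)]
  have hsum : expSum M U V c =
      ∑ i, ∑ j, ψ ((fun k => (U i k : ZMod q)) ⬝ᵥ (fun k => (V j k : ZMod q))) := by
    simp_rw [expSum, hterm, ← Nat.coe_castRingHom, RingHom.map_dotProduct]
    rfl
  have hU := hB.collisionCount_le h hab hq hqd
  have hV := hB.collisionCount_le h.symm hab.symm hq hqd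
  rw [hsum]
  refine (AddChar.norm_sum_sum_dotProduct_sq_le hψ _ _).trans ?_
  rw [ZMod.card, mul_assoc, sq]
  gcongr
  exact (Nat.cast_nonneg _).trans hU

lemma norm_expSum_le [NeZero M] (h : IsPointedMatching M a b U V) (hab : a ≠ b) (c : ℕ)
    (hB : PointedBound.{u, w} ι (Nat.gcd c M)
      (√(Nat.gcd c M) ^ Fintype.card ι * (Nat.gcd c M : ℝ) ^ 3)) :
    ‖expSum M U V c‖ ≤ √M ^ Fintype.card ι * (Nat.gcd c M : ℝ) ^ 3 * Fintype.card α := by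
  have hsq (x : ℝ) (hx : 0 ≤ x) (n : ℕ) : (√x ^ n) ^ 2 = x ^ n := by
    rw [← pow_mul, mul_comm, pow_mul, Real.sq_sqrt hx]
  have hqd : ((M / Nat.gcd c M : ℕ) : ℝ) * Nat.gcd c M = M := by
    exact_mod_cast Nat.div_mul_cancel (Nat.gcd_dvd_right c M)
  refine (sq_le_sq₀ (norm_nonneg _) (by positivity)).1
    ((sq_norm_expSum_le h hab c hB).trans_eq ?_)
  simp only [mul_pow, hsq _ (Nat.cast_nonneg _)]
  rw [← hqd, mul_pow]
  ring

theorem pointedBound_sqrt_pow_mul_pow_three (M : ℕ) (hM : 0 < M) :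
    PointedBound.{u, w} ι M (√M ^ Fintype.card ι * (M : ℝ) ^ 3) := by
  induction M using Nat.strong_induction_on with
  | _ M IH =>
  intro α _ a b U V hab h
  rcases (Nat.succ_le_of_lt hM).eq_or_lt with rfl | hM2
  · have : Subsingleton α :=
      ⟨fun i j => by_contra fun hij => h.not_dvd_dotProduct i j hij (one_dvd _)⟩
    simpa using Fintype.card_le_one_iff_subsingleton.2 this
  have : NeZero M := ⟨hM.ne'⟩
  set t := (Fintype.card α : ℝ)
  set S := √M ^ Fintype.card ι
  have hS : 1 ≤ S := one_le_pow₀ (Real.one_le_sqrt.2 (by exact_mod_cast hM))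
  have hfreq : ∀ c ∈ Ico 1 M, ‖expSum M U V c‖ ≤ S * (Nat.gcd c M : ℝ) ^ 3 * t := by
    intro c hc
    have hc := mem_Ico.1 hc
    exact norm_expSum_le h hab c (IH _ ((Nat.gcd_le_left M hc.1).trans_lt hc.2)
      (Nat.gcd_pos_of_pos_left M hc.1))
  have hsum : t ^ 2 ≤ t * (M + S * ((M : ℝ) ^ 3 - (M : ℝ) ^ 2)) :=
    calc t ^ 2 ≤ t * M + ∑ c ∈ Ico 1 M, ‖expSum M U V c‖ := h.sq_card_le
      _ ≤ t * M + ∑ c ∈ Ico 1 M, S * (Nat.gcd c M : ℝ) ^ 3 * t := by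
        gcongr with c hc
        exact hfreq c hc
      _ ≤ t * (M + S * ((M : ℝ) ^ 3 - (M : ℝ) ^ 2)) := by
        rw [← sum_mul, ← mul_sum, mul_add, mul_comm _ t]
        gcongr
        exact sum_Ico_gcd_pow_three_le M
  have hM1 : (1 : ℝ) ≤ M := by exact_mod_cast hM
  rcases (show (0 : ℝ) ≤ t by positivity).eq_or_lt with ht | ht
  · rw [← ht]
    positivity
  have := le_of_mul_le_mul_left (by simpa only [sq] using hsum) ht
  nlinarith [mul_le_mul hS (by nlinarith : (M : ℝ) ≤ (M : ℝ) ^ 2) (by positivity) (by positivity)]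

end PointedMatching

lemma IsMVFamily.isPointedMatching_vecCons {m n t : ℕ} {u v : Fin t → Fin n → ℕ}
    (h : IsMVFamily m n t u v) :
    IsPointedMatching m 0 1 (fun i => vecCons 0 (vecCons 0 (u i)))
      (fun j => vecCons 0 (vecCons 0 (v j))) where
  dvd_dotProduct_self i := by
    simp only [cons_dotProduct_cons, mul_zero, zero_add]
    exact Nat.dvd_of_mod_eq_zero (h.2.2.1 i)
  not_dvd_dotProduct i j hij := by
    simp only [cons_dotProduct_cons, mul_zero, zero_add, Nat.dvd_iff_mod_eq_zero]
    exact h.2.2.2 i j hij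
  left_apply_eq _ _ := rfl
  right_apply_eq _ _ := rfl

theorem stmt_8_general (m n t : ℕ) (hm : 1 < m) (u v : Fin t → Fin n → ℕ)
    (hMV : IsMVFamily m n t u v) :
    (t : ℝ) ≤ 100 * (m : ℝ) ^ ((n : ℝ) / 2 + 8.47) := by
  have hm1 : (1 : ℝ) ≤ m := by exact_mod_cast hm.le
  have hcard := pointedBound_sqrt_pow_mul_pow_three m (by omega) (Fin t) 0 1 _ _ (by simp)
    hMV.isPointedMatching_vecCons
  calc (t : ℝ) ≤ √m ^ (n + 2) * (m : ℝ) ^ 3 := by simpa using hcard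
    _ = (m : ℝ) ^ ((n : ℝ) / 2 + 4) := by
        rw [Real.sqrt_eq_rpow, ← Real.rpow_natCast, ← Real.rpow_mul (by positivity),
          ← Real.rpow_natCast _ 3, ← Real.rpow_add (by positivity)]
        push_cast
        ring_nf
    _ ≤ (m : ℝ) ^ ((n : ℝ) / 2 + 8.47) := Real.rpow_le_rpow_of_exponent_le hm1 (by norm_num)
    _ ≤ 100 * (m : ℝ) ^ ((n : ℝ) / 2 + 8.47) := by
        linarith [Real.rpow_nonneg (zero_le_one.trans hm1) ((n : ℝ) / 2 + 8.47)]

theorem stmt_8 (m n t : ℕ) (hm : 1 < m) (hn : 1 ≤ n) (u v : Fin t → Fin n → ℕ)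
    (hMV : IsMVFamily m n t u v) :
    (t : ℝ) ≤ 100 * (m : ℝ) ^ ((n : ℝ) / 2 + 8.47) :=
  stmt_8_general m n t hm u v hMV
end

section
/- If m is a product of distinct primes, then every matching vector family in Z_m^n has size at most 100·m^{n/2+4+o_m(1)}; concretely, for every ε > 0 there exists M such that for all squarefree m ≥ M, every MV family in Z_m^n has size at most m^{n/2+4+ε}. -/
/-!
Let `ζ` be a primitive `m`-th root of unity and `S_c = ∑_{i,j} ζ^(c ⟨u_i, v_j⟩)`. Orthogonality of
characters gives `∑_{c < m} S_c = t m`, and `S_0 = t²`, so `t² ≤ t m + ∑_{0 < c < m} |S_c|`.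
For `0 < c < m` let `g = gcd(m, c)` and `s = m / g`: then `ζ^c` is a primitive `s`-th root of unity,
and `s`, `g` are coprime because `m` is squarefree. Grouping the `u_i` by their residue modulo `s`,
Cauchy–Schwarz and Parseval over `(ℤ/s)^n` give `|S_c|² ≤ s^n · C_u · C_v`, where `C_u`, `C_v` count
the pairs of vectors congruent modulo `s`. A residue class modulo `s`, reduced modulo `g`, is a
matching vector family modulo `g`, so by strong induction on `m` it has at most `g^(n/2+4)` members.
Hence `|S_c| ≤ t m^(n/2) g⁴`, and since `∑_{0 < c < m} gcd(m, c)⁴ ≤ m ∑_{d ∣ m, d < m} d³ ≤ m⁴ / 2`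
this yields `t ≤ m^(n/2+4)`.
-/

open Finset

theorem sum_card_fiber_sq {ι β : Type*} [Fintype ι] [DecidableEq β] {f : ι → β} {A : Finset β}
    (hA : ∀ i, f i ∈ A) :
    ∑ b ∈ A, #{i | f i = b} ^ 2 = ∑ i, #{j | f j = f i} := by
  rw [← sum_fiberwise_of_maps_to (fun i _ => hA i)]
  refine sum_congr rfl fun b _ => ?_
  rw [sq, ← smul_eq_mul, ← sum_const]
  exact sum_congr rfl fun i hi => by rw [(mem_filter.mp hi).2]

theorem pow_sum_mul_eq_prod {M κ : Type*} [CommMonoid M] [Fintype κ] (ξ : M) (a w : κ → ℕ) :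
    ξ ^ (∑ k, a k * w k) = ∏ k, (ξ ^ w k) ^ a k := by
  simp_rw [← pow_mul, prod_pow_eq_pow_sum, mul_comm]

theorem IsPrimitiveRoot.pow_eq_pow_of_modEq {M : Type*} [CommMonoid M] {ζ : M} {k a b : ℕ}
    (h : IsPrimitiveRoot ζ k) (hab : a ≡ b [MOD k]) : ζ ^ a = ζ ^ b := by
  rw [← pow_mod_orderOf, ← h.eq_orderOf, hab, h.eq_orderOf, pow_mod_orderOf]

theorem IsPrimitiveRoot.geom_sum_zpow {K : Type*} [Field K] {η : K} {s : ℕ}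
    (hη : IsPrimitiveRoot η s) (z : ℤ) :
    ∑ x ∈ range s, (η ^ z) ^ x = if (s : ℤ) ∣ z then (s : K) else 0 := by
  split_ifs with hz
  · simp [(hη.zpow_eq_one_iff_dvd z).mpr hz]
  · have hne : η ^ z ≠ 1 := fun h => hz ((hη.zpow_eq_one_iff_dvd z).mp h)
    have hpow : (η ^ z) ^ s = 1 := by
      rw [← zpow_natCast, ← zpow_mul, mul_comm, zpow_mul, zpow_natCast, hη.pow_eq_one, one_zpow]
    rw [geom_sum_eq hne, hpow, sub_self, zero_div]

section ResidueClass

variable {ι κ : Type*} [Fintype ι] [Fintype κ]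

def residueClass (s : ℕ) (w : ι → κ → ℕ) (i : ι) : Finset ι :=
  {j | ∀ k, w j k ≡ w i k [MOD s]}

@[simp]
theorem mem_residueClass {s : ℕ} {w : ι → κ → ℕ} {i j : ι} :
    j ∈ residueClass s w i ↔ ∀ k, w j k ≡ w i k [MOD s] := by
  simp [residueClass]

end ResidueClass

section CharacterSum

variable {ι κ : Type*} [Fintype ι] [Fintype κ] [DecidableEq κ] {η : ℂ} {s : ℕ}

theorem IsPrimitiveRoot.sum_pow_mul_inv_pow (hη : IsPrimitiveRoot η s) (hs : s ≠ 0)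
    (w w' : κ → ℕ) :
    ∑ a ∈ Fintype.piFinset fun _ : κ => range s, η ^ (∑ k, a k * w k) * η⁻¹ ^ (∑ k, a k * w' k) =
      if ∀ k, w' k ≡ w k [MOD s] then (s : ℂ) ^ Fintype.card κ else 0 := by
  have hη0 : η ≠ 0 := hη.ne_zero hs
  have hξ : ∀ k, η ^ w k * η⁻¹ ^ w' k = η ^ ((w k : ℤ) - w' k) := fun k => by
    rw [zpow_sub₀ hη0, zpow_natCast, zpow_natCast, inv_pow, div_eq_mul_inv]
  simp_rw [pow_sum_mul_eq_prod, ← prod_mul_distrib, ← mul_pow, sum_prod_piFinset, hξ,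
    hη.geom_sum_zpow, ← Nat.modEq_iff_dvd, Fintype.prod_ite_zero, prod_const, card_univ]

theorem IsPrimitiveRoot.sum_norm_sq_sum_pow (hη : IsPrimitiveRoot η s) (hs : s ≠ 0)
    (w : ι → κ → ℕ) :
    ∑ a ∈ Fintype.piFinset fun _ : κ => range s, ‖∑ j, η ^ (∑ k, a k * w j k)‖ ^ 2 =
      (s : ℝ) ^ Fintype.card κ * ∑ j, (#(residueClass s w j) : ℝ) := by
  have hconj : ∀ N : ℕ, starRingEnd ℂ (η ^ N) = η⁻¹ ^ N := fun N => by
    rw [map_pow, Complex.inv_eq_conj (hη.norm'_eq_one hs)]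
  have hC : ((∑ a ∈ Fintype.piFinset fun _ : κ => range s,
        ‖∑ j, η ^ (∑ k, a k * w j k)‖ ^ 2 : ℝ) : ℂ) =
      (s : ℂ) ^ Fintype.card κ * ∑ j, (#(residueClass s w j) : ℂ) := by
    push_cast
    simp_rw [← Complex.mul_conj', map_sum, hconj, sum_mul_sum]
    rw [sum_comm, mul_sum]
    refine sum_congr rfl fun j _ => ?_
    rw [sum_comm]
    simp_rw [hη.sum_pow_mul_inv_pow hs]
    rw [sum_ite, sum_const_zero, add_zero, sum_const, nsmul_eq_mul, mul_comm]
    rfl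
  exact_mod_cast hC

/-- Cauchy–Schwarz after grouping the rows `u i` by their residue modulo `s`. -/
theorem IsPrimitiveRoot.norm_sum_sum_pow_sq_le (hη : IsPrimitiveRoot η s) (hs : s ≠ 0)
    {ι' : Type*} [Fintype ι'] (u : ι' → κ → ℕ) (v : ι → κ → ℕ) :
    ‖∑ i, ∑ j, η ^ (∑ k, u i k * v j k)‖ ^ 2 ≤
      (∑ i, (#(residueClass s u i) : ℝ)) *
        ((s : ℝ) ^ Fintype.card κ * ∑ j, (#(residueClass s v j) : ℝ)) := by
  set box := Fintype.piFinset fun _ : κ => range s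
  set r : ι' → κ → ℕ := fun i k => u i k % s
  set G : (κ → ℕ) → ℂ := fun a => ∑ j, η ^ (∑ k, a k * v j k)
  have hr : ∀ i, r i ∈ box := fun i =>
    Fintype.mem_piFinset.mpr fun k => mem_range.mpr (Nat.mod_lt _ (Nat.pos_of_ne_zero hs))
  have hclass : ∀ i, residueClass s u i = ({j | r j = r i} : Finset ι') := fun i => by
    ext j; simp [r, funext_iff, Nat.ModEq]
  have hgroup : ∑ i, ∑ j, η ^ (∑ k, u i k * v j k) = ∑ a ∈ box, (#{i | r i = a} : ℂ) * G a := by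
    rw [← sum_fiberwise_of_maps_to (fun i _ => hr i)]
    refine sum_congr rfl fun a _ => ?_
    rw [← nsmul_eq_mul, ← sum_const]
    refine sum_congr rfl fun i hi => ?_
    rw [← (mem_filter.mp hi).2]
    exact sum_congr rfl fun j _ =>
      hη.pow_eq_pow_of_modEq (Nat.ModEq.sum fun k _ => (Nat.mod_modEq _ _).symm.mul_right _)
  calc ‖∑ i, ∑ j, η ^ (∑ k, u i k * v j k)‖ ^ 2
      ≤ (∑ a ∈ box, (#{i | r i = a} : ℝ) * ‖G a‖) ^ 2 := by
        rw [hgroup]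
        gcongr
        refine (norm_sum_le _ _).trans_eq (sum_congr rfl fun a _ => ?_)
        rw [norm_mul, Complex.norm_natCast]
    _ ≤ (∑ a ∈ box, (#{i | r i = a} : ℝ) ^ 2) * ∑ a ∈ box, ‖G a‖ ^ 2 :=
        sum_mul_sq_le_sq_mul_sq _ _ _
    _ = _ := by
        rw [hη.sum_norm_sq_sum_pow hs]
        congr 1
        simp_rw [hclass]
        exact_mod_cast sum_card_fiber_sq hr

end CharacterSum

theorem Nat.two_mul_le_of_mem_properDivisors {m d : ℕ} (hd : d ∈ m.properDivisors) : 2 * d ≤ m := by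
  obtain ⟨⟨q, rfl⟩, hdm⟩ := Nat.mem_properDivisors.mp hd
  rcases q with _ | _ | q
  · simp at hdm
  · simp at hdm
  · nlinarith

theorem sum_gcd_pow_succ_le (m k : ℕ) :
    ∑ c ∈ Ico 1 m, (Nat.gcd m c : ℝ) ^ (k + 1) ≤ m * ∑ d ∈ m.properDivisors, (d : ℝ) ^ k := by
  have hmaps : ∀ c ∈ Ico 1 m, Nat.gcd m c ∈ m.properDivisors := fun c hc => by
    obtain ⟨hc1, hcm⟩ := mem_Ico.mp hc
    exact Nat.mem_properDivisors.mpr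
      ⟨Nat.gcd_dvd_left m c, (Nat.le_of_dvd hc1 (Nat.gcd_dvd_right m c)).trans_lt hcm⟩
  rw [← sum_fiberwise_of_maps_to hmaps, mul_sum]
  refine sum_le_sum fun d _ => ?_
  have hcard : #{c ∈ Ico 1 m | Nat.gcd m c = d} * d ≤ m := by
    calc #{c ∈ Ico 1 m | Nat.gcd m c = d} * d ≤ #{c ∈ Ioc 0 m | d ∣ c} * d := by
          gcongr
          intro c hc
          obtain ⟨hcI, rfl⟩ := mem_filter.mp hc
          exact mem_filter.mpr
            ⟨mem_Ioc.mpr ⟨(mem_Ico.mp hcI).1, (mem_Ico.mp hcI).2.le⟩, Nat.gcd_dvd_right m c⟩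
      _ ≤ m := by rw [Nat.Ioc_filter_dvd_card_eq_div]; exact Nat.div_mul_le_self m d
  calc ∑ c ∈ Ico 1 m with Nat.gcd m c = d, (Nat.gcd m c : ℝ) ^ (k + 1)
      = (#{c ∈ Ico 1 m | Nat.gcd m c = d} * d : ℕ) * (d : ℝ) ^ k := by
        rw [sum_congr rfl fun c hc => by rw [(mem_filter.mp hc).2], sum_const, nsmul_eq_mul]
        push_cast
        ring
    _ ≤ m * (d : ℝ) ^ k := by gcongr

theorem sum_properDivisors_sq_le (m : ℕ) : ∑ d ∈ m.properDivisors, (d : ℝ) ^ 2 ≤ m ^ 2 := by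
  rcases eq_or_ne m 0 with rfl | hm
  · simp
  have hflip : ∑ d ∈ m.properDivisors, (d : ℝ) ^ 2 =
      ∑ k ∈ m.divisors.erase 1, ((m / k : ℕ) : ℝ) ^ 2 := by
    have hdiv : ∑ d ∈ m.divisors, (d : ℝ) ^ 2 = m ^ 2 + ∑ d ∈ m.properDivisors, (d : ℝ) ^ 2 := by
      rw [← Nat.cons_self_properDivisors hm, sum_cons]
    have hdiv' : ∑ d ∈ m.divisors, ((m / d : ℕ) : ℝ) ^ 2 =
        m ^ 2 + ∑ k ∈ m.divisors.erase 1, ((m / k : ℕ) : ℝ) ^ 2 := by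
      rw [← add_sum_erase _ _ (Nat.one_mem_divisors.mpr hm), Nat.div_one]
    linarith [Nat.sum_div_divisors m fun d => (d : ℝ) ^ 2]
  calc ∑ d ∈ m.properDivisors, (d : ℝ) ^ 2
      ≤ ∑ k ∈ m.divisors.erase 1, (m : ℝ) ^ 2 * ((k : ℝ) ^ 2)⁻¹ := by
        rw [hflip]
        refine sum_le_sum fun k _ => ?_
        rw [← div_eq_mul_inv, ← div_pow]
        gcongr
        exact Nat.cast_div_le
    _ ≤ ∑ k ∈ Ioo 1 (m + 1), (m : ℝ) ^ 2 * ((k : ℝ) ^ 2)⁻¹ := by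
        refine sum_le_sum_of_subset_of_nonneg (fun k hk => ?_) fun _ _ _ => by positivity
        obtain ⟨hk1, hk⟩ := mem_erase.mp hk
        have := Nat.pos_of_mem_divisors hk
        have := Nat.divisor_le hk
        exact mem_Ioo.mpr ⟨by omega, by omega⟩
    _ ≤ (m : ℝ) ^ 2 * 1 := by
        rw [← mul_sum]
        gcongr
        have h := sum_Ioo_inv_sq_le (α := ℝ) 1 (m + 1)
        norm_num at h
        exact h
    _ = m ^ 2 := mul_one _

theorem sum_gcd_pow_four_le (m : ℕ) : ∑ c ∈ Ico 1 m, (Nat.gcd m c : ℝ) ^ 4 ≤ m ^ 4 - m := by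
  rcases lt_or_ge m 2 with hm | hm
  · interval_cases m <;> simp
  have hhalf : ∀ d ∈ m.properDivisors, (d : ℝ) ^ 3 ≤ m / 2 * (d : ℝ) ^ 2 := fun d hd => by
    have : (2 * d : ℝ) ≤ m := by exact_mod_cast Nat.two_mul_le_of_mem_properDivisors hd
    rw [pow_succ']
    gcongr
    linarith
  have hm2 : (2 : ℝ) ≤ m := by exact_mod_cast hm
  calc ∑ c ∈ Ico 1 m, (Nat.gcd m c : ℝ) ^ 4
      ≤ m * ∑ d ∈ m.properDivisors, (d : ℝ) ^ 3 := sum_gcd_pow_succ_le m 3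
    _ ≤ m * (m / 2 * ∑ d ∈ m.properDivisors, (d : ℝ) ^ 2) := by
        gcongr m * ?_
        rw [mul_sum]
        exact sum_le_sum hhalf
    _ ≤ m * (m / 2 * m ^ 2) := by gcongr; exact sum_properDivisors_sq_le m
    _ ≤ m ^ 4 - m := by nlinarith [pow_le_pow_left₀ (by norm_num) hm2 3]

namespace IsMVFamily

variable {m n t : ℕ} {u v : Fin t → Fin n → ℕ}

theorem symm (h : IsMVFamily m n t u v) : IsMVFamily m n t v u := by
  obtain ⟨hu, hv, hdiag, hoff⟩ := h
  refine ⟨hv, hu, fun i => ?_, fun i j hij => ?_⟩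
  · simpa only [mul_comm] using hdiag i
  · simpa only [mul_comm] using hoff j i (Ne.symm hij)

/-- An inner product `⟨u_a, v_b⟩` is congruent to `⟨u_b, v_b⟩ ≡ 0` modulo `s`, so by coprimality it
vanishes modulo `d` only if `a = b`. -/
theorem comp_mod {s d t' : ℕ} (h : IsMVFamily (s * d) n t u v) (hsd : s.Coprime d) (hd : 0 < d)
    {e : Fin t' → Fin t} (he : Function.Injective e)
    (hu : ∀ a b k, u (e a) k ≡ u (e b) k [MOD s]) :
    IsMVFamily d n t' (fun a k => u (e a) k % d) (fun a k => v (e a) k % d) := by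
  obtain ⟨-, -, hdiag, hoff⟩ := h
  have hred : ∀ a b, ∑ k, u (e a) k % d * (v (e b) k % d) ≡ ∑ k, u (e a) k * v (e b) k [MOD d] :=
    fun a b => Nat.ModEq.sum fun k _ => (Nat.mod_modEq _ _).mul (Nat.mod_modEq _ _)
  refine ⟨fun _ _ => Nat.mod_lt _ hd, fun _ _ => Nat.mod_lt _ hd, fun a => ?_,
    fun a b hab hd0 => ?_⟩
  · rw [hred a a, ← Nat.mod_mul_left_mod, hdiag, Nat.zero_mod]
  · have hdvd : ∀ i, s * d ∣ ∑ k, u i k * v i k := fun i => Nat.dvd_of_mod_eq_zero (hdiag i)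
    have hs : s ∣ ∑ k, u (e a) k * v (e b) k := by
      have : ∑ k, u (e a) k * v (e b) k ≡ ∑ k, u (e b) k * v (e b) k [MOD s] :=
        Nat.ModEq.sum fun k _ => (hu a b k).mul_right _
      exact (Nat.modEq_zero_iff_dvd.mp <| this.trans <|
        Nat.modEq_zero_iff_dvd.mpr <| (dvd_mul_right s d).trans (hdvd (e b)))
    have hd' : d ∣ ∑ k, u (e a) k * v (e b) k :=
      Nat.modEq_zero_iff_dvd.mp ((hred a b).symm.trans hd0)
    exact hoff (e a) (e b) (he.ne hab) (Nat.mod_eq_zero_of_dvd (hsd.mul_dvd_of_dvd_of_dvd hs hd'))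

theorem exists_isMVFamily_card_residueClass {s d : ℕ} (h : IsMVFamily (s * d) n t u v)
    (hsd : s.Coprime d) (hd : 0 < d) (i : Fin t) :
    ∃ u' v' : Fin #(residueClass s u i) → Fin n → ℕ, IsMVFamily d n _ u' v' := by
  set S := residueClass s u i
  let e : Fin #S → Fin t := fun a => S.equivFin.symm a
  have he : Function.Injective e := fun a b hab => S.equivFin.symm.injective (Subtype.ext hab)
  have hmem : ∀ a k, u (e a) k ≡ u i k [MOD s] := fun a => mem_residueClass.mp (S.equivFin.symm a).2
  exact ⟨_, _, h.comp_mod hsd hd he fun a b k => (hmem a k).trans (hmem b k).symm⟩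

theorem sum_range_sum_sum_pow (h : IsMVFamily m n t u v) {ζ : ℂ} (hζ : IsPrimitiveRoot ζ m) :
    ∑ c ∈ range m, ∑ i, ∑ j, (ζ ^ c) ^ (∑ k, u i k * v j k) = t * m := by
  have horth : ∀ i j, ∑ c ∈ range m, (ζ ^ c) ^ (∑ k, u i k * v j k) =
      if i = j then (m : ℂ) else 0 := fun i j => by
    simp_rw [← pow_mul, mul_comm _ (∑ k, _), pow_mul, ← zpow_natCast ζ (∑ k, _),
      hζ.geom_sum_zpow, Int.natCast_dvd_natCast, Nat.dvd_iff_mod_eq_zero]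
    by_cases hij : i = j
    · simp [hij, h.2.2.1 j]
    · simp [hij, h.2.2.2 i j hij]
  rw [sum_comm]
  simp_rw [sum_comm (s := range m), horth]
  simp

theorem card_sq_le (h : IsMVFamily m n t u v) (hm : m ≠ 0) {ζ : ℂ} (hζ : IsPrimitiveRoot ζ m) :
    (t : ℝ) ^ 2 ≤ t * m + ∑ c ∈ Ico 1 m, ‖∑ i, ∑ j, (ζ ^ c) ^ (∑ k, u i k * v j k)‖ := by
  have htotal := h.sum_range_sum_sum_pow hζ
  rw [range_eq_Ico, sum_eq_sum_Ico_succ_bot (Nat.pos_of_ne_zero hm)] at htotal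
  have hsplit : (t : ℂ) ^ 2 =
      t * m - ∑ c ∈ Ico 1 m, ∑ i, ∑ j, (ζ ^ c) ^ (∑ k, u i k * v j k) := by
    simp only [pow_zero, one_pow, sum_const, card_univ, Fintype.card_fin, nsmul_eq_mul,
      mul_one] at htotal
    linear_combination htotal
  calc (t : ℝ) ^ 2 = ‖(t : ℂ) ^ 2‖ := by simp
    _ ≤ ‖(t * m : ℂ)‖ + ‖∑ c ∈ Ico 1 m, ∑ i, ∑ j, (ζ ^ c) ^ (∑ k, u i k * v j k)‖ := by
      rw [hsplit]; exact norm_sub_le _ _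
    _ ≤ _ := by
      gcongr
      · simp
      · exact norm_sum_le _ _

theorem norm_sum_sum_pow_le {s d : ℕ} (h : IsMVFamily (s * d) n t u v) (hsd : s.Coprime d)
    (hs : s ≠ 0) (hd : 0 < d) {η : ℂ} (hη : IsPrimitiveRoot η s) {D : ℝ}
    (hD : ∀ t' (u' v' : Fin t' → Fin n → ℕ), IsMVFamily d n t' u' v' → (t' : ℝ) ≤ D) :
    ‖∑ i, ∑ j, η ^ (∑ k, u i k * v j k)‖ ≤ t * D * (s : ℝ) ^ ((n : ℝ) / 2) := by
  have hclass : ∀ {w w' : Fin t → Fin n → ℕ}, IsMVFamily (s * d) n t w w' →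
      ∑ i, (#(residueClass s w i) : ℝ) ≤ t * D := fun hw => by
    calc ∑ i, (#(residueClass s _ i) : ℝ) ≤ ∑ _i : Fin t, D := sum_le_sum fun i _ => by
          obtain ⟨u', v', h'⟩ := hw.exists_isMVFamily_card_residueClass hsd hd i
          exact hD _ u' v' h'
      _ = t * D := by simp
  have htD : 0 ≤ t * D := (sum_nonneg fun _ _ => Nat.cast_nonneg _).trans (hclass h)
  have hsn : ((s : ℝ) ^ ((n : ℝ) / 2)) ^ 2 = s ^ n := by
    rw [← Real.rpow_natCast, ← Real.rpow_mul (Nat.cast_nonneg s)]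
    norm_num
  have hsq := hη.norm_sum_sum_pow_sq_le hs u v
  rw [Fintype.card_fin] at hsq
  refine (pow_le_pow_iff_left₀ (norm_nonneg _) (by positivity) two_ne_zero).mp ?_
  calc ‖∑ i, ∑ j, η ^ (∑ k, u i k * v j k)‖ ^ 2 ≤ (t * D) * (s ^ n * (t * D)) :=
        hsq.trans (by gcongr; exacts [hclass h, hclass h.symm])
    _ = (t * D * (s : ℝ) ^ ((n : ℝ) / 2)) ^ 2 := by rw [mul_pow, hsn]; ring

theorem card_le (hm : Squarefree m) (h : IsMVFamily m n t u v) :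
    (t : ℝ) ≤ (m : ℝ) ^ ((n : ℝ) / 2 + 4) := by
  induction m using Nat.strong_induction_on generalizing t with
  | _ m ih =>
  have hm0 : m ≠ 0 := hm.ne_zero
  obtain ⟨ζ, hζ⟩ : ∃ ζ : ℂ, IsPrimitiveRoot ζ m := ⟨_, Complex.isPrimitiveRoot_exp m hm0⟩
  set X : ℝ := (m : ℝ) ^ ((n : ℝ) / 2)
  have hX : 1 ≤ X := Real.one_le_rpow (by exact_mod_cast Nat.one_le_iff_ne_zero.mpr hm0)
    (by positivity)
  have hterm : ∀ c ∈ Ico 1 m,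
      ‖∑ i, ∑ j, (ζ ^ c) ^ (∑ k, u i k * v j k)‖ ≤ t * X * (Nat.gcd m c : ℝ) ^ 4 := by
    intro c hc
    obtain ⟨hc1, hcm⟩ := mem_Ico.mp hc
    set g := Nat.gcd m c
    set s := m / g
    have hsg : s * g = m := Nat.div_mul_cancel (Nat.gcd_dvd_left m c)
    have hg0 : 0 < g := Nat.gcd_pos_of_pos_right m hc1
    have hgm : g < m := (Nat.le_of_dvd hc1 (Nat.gcd_dvd_right m c)).trans_lt hcm
    have hs : s ≠ 0 := Nat.div_ne_zero_iff_of_dvd (Nat.gcd_dvd_left m c) |>.mpr ⟨hm0, hg0.ne'⟩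
    have hη : IsPrimitiveRoot (ζ ^ c) s := by
      have := IsPrimitiveRoot.orderOf (ζ ^ c)
      rwa [orderOf_pow' ζ (Nat.one_le_iff_ne_zero.mp hc1), ← hζ.eq_orderOf] at this
    have hfam : IsMVFamily (s * g) n t u v := hsg ▸ h
    refine (hfam.norm_sum_sum_pow_le (Nat.coprime_of_squarefree_mul (hsg ▸ hm)) hs hg0 hη
      fun t' u' v' h' => ih g hgm (hm.squarefree_of_dvd (Nat.gcd_dvd_left m c)) h').trans_eq ?_
    have hg : (0 : ℝ) < g := by exact_mod_cast hg0
    rw [Real.rpow_add hg, Real.rpow_ofNat, show X = (s * g : ℕ) ^ ((n : ℝ) / 2) by rw [hsg],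
      Nat.cast_mul, Real.mul_rpow (Nat.cast_nonneg s) hg.le]
    ring
  have hsq : (t : ℝ) ^ 2 ≤ t * (m + X * (m ^ 4 - m)) := by
    calc (t : ℝ) ^ 2 ≤ t * m + ∑ c ∈ Ico 1 m, ‖∑ i, ∑ j, (ζ ^ c) ^ (∑ k, u i k * v j k)‖ :=
          h.card_sq_le hm0 hζ
      _ ≤ t * m + ∑ c ∈ Ico 1 m, t * X * (Nat.gcd m c : ℝ) ^ 4 := by
          gcongr with c hc
          exact hterm c hc
      _ ≤ t * (m + X * (m ^ 4 - m)) := by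
          rw [← mul_sum, mul_add, mul_assoc]
          gcongr
          exact sum_gcd_pow_four_le m
  have hpow : (m : ℝ) ^ ((n : ℝ) / 2 + 4) = X * m ^ 4 := by
    rw [Real.rpow_add (by positivity), Real.rpow_ofNat]
  have hbound : (m : ℝ) + X * (m ^ 4 - m) ≤ X * m ^ 4 := by
    nlinarith [(Nat.cast_nonneg m : (0 : ℝ) ≤ m)]
  have hB : 0 ≤ X * (m : ℝ) ^ 4 := by positivity
  rw [hpow]
  nlinarith [mul_le_mul_of_nonneg_left hbound (Nat.cast_nonneg t : (0 : ℝ) ≤ t)]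

end IsMVFamily

theorem stmt_15 (ε : ℝ) (hε : 0 < ε) :
    ∃ M : ℕ, ∀ m : ℕ, M ≤ m → Squarefree m →
      ∀ (n t : ℕ) (u v : Fin t → Fin n → ℕ), IsMVFamily m n t u v →
        (t : ℝ) ≤ (m : ℝ) ^ ((n : ℝ) / 2 + 4 + ε) := by
  refine ⟨0, fun m _ hm n t u v h => (h.card_le hm).trans ?_⟩
  exact Real.rpow_le_rpow_of_exponent_le
    (by exact_mod_cast Nat.one_le_iff_ne_zero.mpr hm.ne_zero) (by linarith)
end
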